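/- arXiv:1212.2723 — 4 statements merged into one kernel-verified Lean document; each statement's English description precedes it below -/
import Mathlib

section
/- Let a > 0 and u(x,t) = exp(a*x + a^2*t). Set A = sup over Q = [1,3] × [1,2] of u, so A = exp(3a + 2a^2). Then u_{xx}(2,2)/u(2,2) = a^2 and log(A/u(2,2)) = a; hence u_{xx}(2,2)/u(2,2) = (log(A/u(2,2)))^2. -/
open Set Real

lemma isGreatest_image_Icc_prod_Icc {α β γ : Type*} [Preorder α] [Preorder β] [Preorder γ]
    {f : α → β → γ} (hf₁ : ∀ t, Monotone (f · t)) (hf₂ : ∀ x, Monotone (f x))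
    {a₁ b₁ : α} {a₂ b₂ : β} (h₁ : a₁ ≤ b₁) (h₂ : a₂ ≤ b₂) :
    IsGreatest ((fun p : α × β => f p.1 p.2) '' (Icc a₁ b₁ ×ˢ Icc a₂ b₂)) (f b₁ b₂) := by
  rw [Icc_prod_Icc]
  exact (monotone_prod_iff.mpr ⟨hf₂, hf₁⟩).map_isGreatest
    (isGreatest_Icc (Prod.mk_le_mk.mpr ⟨h₁, h₂⟩))

lemma deriv_exp_const_mul_add (a c : ℝ) :
    deriv (fun y => exp (a * y + c)) = fun y => a * exp (a * y + c) := by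
  funext y
  rw [((((hasDerivAt_id' y).const_mul a).add_const c).exp).deriv, mul_one, mul_comm]

lemma deriv_deriv_exp_const_mul_add (a c : ℝ) :
    deriv (deriv fun y => exp (a * y + c)) = fun y => a ^ 2 * exp (a * y + c) := by
  simp only [deriv_exp_const_mul_add, deriv_const_mul_field', ← mul_assoc, sq]

/-- For `u(x,t) = exp(a x + a² t)`, `a > 0`, with `A = sup_{[1,3]×[1,2]} u = exp(3a + 2a²)`,
one has `u_{xx}(2,2)/u(2,2) = a²` and `log(A/u(2,2)) = a`, hence
`u_{xx}(2,2)/u(2,2) = (log(A/u(2,2)))²`. -/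
theorem stmt_1 (a : ℝ) (ha : 0 < a)
    (u : ℝ → ℝ → ℝ) (hu : ∀ x t, u x t = Real.exp (a * x + a ^ 2 * t))
    (A : ℝ)
    (hA : A = sSup ((fun p : ℝ × ℝ => u p.1 p.2) '' (Set.Icc 1 3 ×ˢ Set.Icc 1 2))) :
    A = Real.exp (3 * a + 2 * a ^ 2) ∧
    deriv (deriv (fun y => u y 2)) 2 / u 2 2 = a ^ 2 ∧
    Real.log (A / u 2 2) = a ∧
    deriv (deriv (fun y => u y 2)) 2 / u 2 2 = (Real.log (A / u 2 2)) ^ 2 := by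
  have hsup : A = u 3 2 := by
    rw [hA]
    refine (isGreatest_image_Icc_prod_Icc (fun t x y hxy => ?_) (fun x t s hts => ?_)
      (by norm_num) (by norm_num)).csSup_eq
    · simp only [hu]; gcongr
    · simp only [hu]; gcongr
  have hA_eq : A = exp (3 * a + 2 * a ^ 2) := by rw [hsup, hu]; ring_nf
  have hslice : (fun y => u y 2) = fun y => exp (a * y + a ^ 2 * 2) := funext fun y => hu y 2
  have hu_xx : deriv (deriv (fun y => u y 2)) 2 / u 2 2 = a ^ 2 := by
    rw [hslice, deriv_deriv_exp_const_mul_add, hu, mul_div_cancel_right₀ _ (exp_ne_zero _)]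
  have hlog : log (A / u 2 2) = a := by
    rw [hsup, hu, hu, ← exp_sub, log_exp]; ring
  exact ⟨hA_eq, hu_xx, hlog, by rw [hu_xx, hlog]⟩
end

section
/- Let V and W be symmetric n×n real matrices, α ≥ 4 a real number, f ≤ 0 a real number, w = tr(W), and suppose W is positive semidefinite of rank at most one. Let ξ be a unit eigenvector of αV + W with eigenvalue λ ≥ 0. Then the quantity H = α(1−f) w ξᵀVξ + 2(1−f) w ξᵀWξ + 2|(V + fW)ξ|² satisfies H ≥ 2λ²/α². -/
/-!
Write `W = v vᵀ` and `s = ⟨v, ξ⟩`, so that `Wξ = s v`, `ξᵀWξ = s²` and `w = |v|²`. The eigenvalue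
equation `αVξ = λξ - s v` turns every term of `H` into a polynomial in `λ`, `s²` and `w`:
`α ξᵀVξ = λ - s²` and `α (V + fW)ξ = λξ + (fα - 1) s v`. After multiplying by `α²`, the claim
reduces to a scalar inequality whose only non-obvious term, `4λ(fα - 1)s²`, is absorbed by
`α²(1 - f) λ w ≥ α²(1 - f) λ s²` (Cauchy–Schwarz) because `α²(1 - f) ≥ 4(1 - fα)` when `α ≥ 4`
and `f ≤ 0`.
-/

open Matrix

open scoped RealInnerProductSpace

theorem bernstein_scalar_ineq {α f lam t w : ℝ} (hα : 4 ≤ α) (hf : f ≤ 0) (hlam : 0 ≤ lam)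
    (ht : 0 ≤ t) (htw : t ≤ w) :
    2 * lam ^ 2 ≤ α ^ 2 * (1 - f) * w * (lam - t) + 2 * α ^ 2 * (1 - f) * w * t
      + 2 * (lam ^ 2 + 2 * lam * (f * α - 1) * t + (f * α - 1) ^ 2 * t * w) := by
  have hcoef : 0 ≤ α ^ 2 * (1 - f) - 4 * (1 - f * α) := by
    nlinarith [mul_nonneg (neg_nonneg.2 hf) (mul_nonneg (by linarith : 0 ≤ α) (sub_nonneg.2 hα))]
  have h1f : 0 ≤ α ^ 2 * (1 - f) := mul_nonneg (sq_nonneg α) (by linarith)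
  -- the difference of the two sides is the sum of these four nonnegative terms
  linarith [mul_nonneg h1f (mul_nonneg hlam (sub_nonneg.2 htw)),
    mul_nonneg hcoef (mul_nonneg hlam ht), mul_nonneg h1f (mul_nonneg ht (ht.trans htw)),
    mul_nonneg (mul_nonneg (sq_nonneg (f * α - 1)) ht) (ht.trans htw)]

theorem bernstein_ineq_of_rankOne_eigen {E : Type*} [NormedAddCommGroup E]
    [InnerProductSpace ℝ E] {u v ξ : E} {α f lam : ℝ} (hα : 4 ≤ α) (hf : f ≤ 0)
    (hlam : 0 ≤ lam) (hξ : ‖ξ‖ = 1) (heig : α • u + ⟪v, ξ⟫ • v = lam • ξ) :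
    2 * lam ^ 2 / α ^ 2 ≤ α * (1 - f) * ‖v‖ ^ 2 * ⟪u, ξ⟫ + 2 * (1 - f) * ‖v‖ ^ 2 * ⟪v, ξ⟫ ^ 2
      + 2 * ‖u + (f * ⟪v, ξ⟫) • v‖ ^ 2 := by
  set s := ⟪v, ξ⟫
  have hu : α * ⟪u, ξ⟫ = lam - s ^ 2 := by
    have h := congrArg (⟪·, ξ⟫) heig
    simp only [inner_add_left, real_inner_smul_left, real_inner_self_eq_norm_sq, hξ] at h
    linear_combination h
  have hnorm : α ^ 2 * ‖u + (f * s) • v‖ ^ 2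
      = lam ^ 2 + 2 * lam * (f * α - 1) * s ^ 2 + (f * α - 1) ^ 2 * s ^ 2 * ‖v‖ ^ 2 := by
    have h : α • (u + (f * s) • v) = lam • ξ + ((f * α - 1) * s) • v := by
      rw [smul_add, smul_smul, ← sub_eq_iff_eq_add', ← heig]
      module
    calc α ^ 2 * ‖u + (f * s) • v‖ ^ 2 = ‖α • (u + (f * s) • v)‖ ^ 2 := by
          rw [norm_smul, mul_pow, Real.norm_eq_abs, sq_abs]
      _ = ‖lam • ξ + ((f * α - 1) * s) • v‖ ^ 2 := by rw [h]
      _ = _ := by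
          rw [norm_add_sq_real, norm_smul, norm_smul, real_inner_smul_left, real_inner_smul_right,
            real_inner_comm, hξ]
          simp only [mul_pow, Real.norm_eq_abs, sq_abs]
          ring
  have hcs : s ^ 2 ≤ ‖v‖ ^ 2 := by
    simpa [hξ, real_inner_self_eq_norm_sq, ← sq] using real_inner_mul_inner_self_le v ξ
  rw [div_le_iff₀ (by positivity)]
  calc 2 * lam ^ 2 ≤ α ^ 2 * (1 - f) * ‖v‖ ^ 2 * (lam - s ^ 2)
        + 2 * α ^ 2 * (1 - f) * ‖v‖ ^ 2 * s ^ 2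
        + 2 * (lam ^ 2 + 2 * lam * (f * α - 1) * s ^ 2 + (f * α - 1) ^ 2 * s ^ 2 * ‖v‖ ^ 2) :=
        bernstein_scalar_ineq hα hf hlam (sq_nonneg s) hcs
    _ = _ := by rw [← hu, ← hnorm]; ring

theorem norm_toLp_two_sq {ι : Type*} [Fintype ι] (x : ι → ℝ) :
    ‖WithLp.toLp 2 x‖ ^ 2 = ∑ i, x i ^ 2 := by
  simp [EuclideanSpace.real_norm_sq_eq]

theorem stmt_8_general (n : ℕ) (V W : Matrix (Fin n) (Fin n) ℝ)
    (v : Fin n → ℝ) (hW : ∀ i j, W i j = v i * v j)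
    (α f lam : ℝ) (hα : 4 ≤ α) (hf : f ≤ 0) (hlam : 0 ≤ lam)
    (ξ : Fin n → ℝ) (hξ : ∑ i, ξ i ^ 2 = 1)
    (heig : (α • V + W).mulVec ξ = lam • ξ)
    (w : ℝ) (hw : w = W.trace)
    (H : ℝ)
    (hH : H = α * (1 - f) * w * (ξ ⬝ᵥ V.mulVec ξ)
        + 2 * (1 - f) * w * (ξ ⬝ᵥ W.mulVec ξ)
        + 2 * ∑ k, ((V + f • W).mulVec ξ k) ^ 2) :
    H ≥ 2 * lam ^ 2 / α ^ 2 := by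
  obtain rfl : W = vecMulVec v v := Matrix.ext hW
  have hWξ : vecMulVec v v *ᵥ ξ = (ξ ⬝ᵥ v) • v := by
    rw [vecMulVec_mulVec, op_smul_eq_smul, dotProduct_comm]
  have hinner (x y : Fin n → ℝ) : ⟪WithLp.toLp 2 x, WithLp.toLp 2 y⟫ = y ⬝ᵥ x := by
    rw [EuclideanSpace.inner_toLp_toLp, star_trivial]
  have hξ' : ‖WithLp.toLp 2 ξ‖ = 1 := by
    rw [← pow_eq_one_iff_of_nonneg (norm_nonneg _) two_ne_zero, norm_toLp_two_sq, hξ]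
  have heig' : α • WithLp.toLp 2 (V *ᵥ ξ) + ⟪WithLp.toLp 2 v, WithLp.toLp 2 ξ⟫ • WithLp.toLp 2 v
      = lam • WithLp.toLp 2 ξ := by
    rw [hinner, ← WithLp.toLp_smul, ← WithLp.toLp_smul, ← WithLp.toLp_add, ← WithLp.toLp_smul,
      ← smul_mulVec, ← hWξ, ← add_mulVec, heig]
  have key := bernstein_ineq_of_rankOne_eigen hα hf hlam hξ' heig'
  rw [hinner, hinner, ← real_inner_self_eq_norm_sq, hinner, ← WithLp.toLp_smul, ← WithLp.toLp_add,
    norm_toLp_two_sq] at key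
  rwa [hH, hw, trace_vecMulVec, add_mulVec, smul_mulVec, hWξ, smul_smul, dotProduct_smul,
    smul_eq_mul, ← sq]

/-- Key algebraic inequality in the Bernstein argument: with `W = v vᵀ` rank one
PSD, `w = tr W`, `f ≤ 0`, `α ≥ 4`, and `ξ` a unit eigenvector of `αV + W` with
eigenvalue `λ ≥ 0`, the quantity
`H = α(1−f)w ξᵀVξ + 2(1−f)w ξᵀWξ + 2|(V + fW)ξ|²` satisfies `H ≥ 2λ²/α²`. -/
theorem stmt_8 (n : ℕ) (V W : Matrix (Fin n) (Fin n) ℝ)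
    (hV : V.IsSymm) (hWsymm : W.IsSymm)
    (v : Fin n → ℝ) (hW : ∀ i j, W i j = v i * v j)
    (α f lam : ℝ) (hα : 4 ≤ α) (hf : f ≤ 0) (hlam : 0 ≤ lam)
    (ξ : Fin n → ℝ) (hξ : ∑ i, ξ i ^ 2 = 1)
    (heig : (α • V + W).mulVec ξ = lam • ξ)
    (w : ℝ) (hw : w = W.trace)
    (H : ℝ)
    (hH : H = α * (1 - f) * w * (ξ ⬝ᵥ V.mulVec ξ)
        + 2 * (1 - f) * w * (ξ ⬝ᵥ W.mulVec ξ)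
        + 2 * ∑ k, ((V + f • W).mulVec ξ k) ^ 2) :
    H ≥ 2 * lam ^ 2 / α ^ 2 :=
  stmt_8_general n V W v hW α f lam hα hf hlam ξ hξ heig w hw H hH
end

section
/- Let u : ℝⁿ × (0,T] → ℝ be a positive smooth solution of the heat equation with 0 < u ≤ A, f = log(u/A), and set v_{ij} = u_{ij}/(u(1−f)). Then v_{ij} satisfies (−∂_t + Δ − (2f/(1−f))∇f·∇) v_{ij} = (|∇f|²/(1−f)) v_{ij} in the Euclidean setting (where all curvature terms vanish). -/
open RealInnerProductSpace

/-- Partial derivative in the `i`-th coordinate direction. -/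
noncomputable def pd {n : ℕ} (u : EuclideanSpace ℝ (Fin n) → ℝ) (i : Fin n)
    (x : EuclideanSpace ℝ (Fin n)) : ℝ :=
  fderiv ℝ u x (EuclideanSpace.single i 1)

/-- Euclidean Laplacian. -/
noncomputable def lap {n : ℕ} (u : EuclideanSpace ℝ (Fin n) → ℝ)
    (x : EuclideanSpace ℝ (Fin n)) : ℝ :=
  ∑ i, pd (pd u i) i x

section DD
variable {Z : Type*} [NormedAddCommGroup Z] [NormedSpace ℝ Z]

noncomputable def DD (w : Z) (G : Z → ℝ) (q : Z) : ℝ := fderiv ℝ G q w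

lemma DD_smooth {G : Z → ℝ} (hG : ContDiff ℝ (⊤ : ℕ∞) G) (w : Z) : ContDiff ℝ (⊤ : ℕ∞) (DD w G) := by
  have h1 : ContDiff ℝ (⊤ : ℕ∞) (fderiv ℝ G) := hG.fderiv_right (by simp)
  exact h1.clm_apply contDiff_const

lemma DD_comm {G : Z → ℝ} (hG : ContDiff ℝ (⊤ : ℕ∞) G) (v w : Z) :
    DD v (DD w G) = DD w (DD v G) := by
  funext q
  have hd : ∀ y, HasFDerivAt G (fderiv ℝ G y) y := fun y =>
    (hG.differentiable (by simp) y).hasFDerivAt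
  have h1 : ContDiff ℝ (⊤ : ℕ∞) (fderiv ℝ G) := hG.fderiv_right (by simp)
  have h2 : HasFDerivAt (fderiv ℝ G) (fderiv ℝ (fderiv ℝ G) q) q :=
    (h1.differentiable (by simp) q).hasFDerivAt
  have hsymm := second_derivative_symmetric hd h2 v w
  have key : ∀ a b : Z, DD a (DD b G) q = fderiv ℝ (fderiv ℝ G) q a b := by
    intro a b
    show fderiv ℝ (fun y => fderiv ℝ G y b) q a = _
    rw [fderiv_clm_apply (h1.differentiable (by simp) q) (differentiableAt_const b)]
    simp
  rw [key, key, hsymm]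

lemma DD_sum {ι : Type*} (s : Finset ι) {G : ι → Z → ℝ} {q : Z}
    (h : ∀ k ∈ s, DifferentiableAt ℝ (G k) q) (w : Z) :
    DD w (fun r => ∑ k ∈ s, G k r) q = ∑ k ∈ s, DD w (G k) q := by
  simp only [DD, fderiv_fun_sum h]
  simp

end DD

section Slice
variable {n : ℕ}
local notation "E" => EuclideanSpace ℝ (Fin n)

lemma hasFDerivAt_slice_x (t : ℝ) (x : E) :
    HasFDerivAt (fun y : E => ((y, t) : E × ℝ))
      ((ContinuousLinearMap.id ℝ E).prod 0) x :=
  HasFDerivAt.prodMk (hasFDerivAt_id x) (hasFDerivAt_const t x)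

lemma pd_slice (G : E × ℝ → ℝ) {x : E} {t : ℝ} (hG : DifferentiableAt ℝ G (x, t)) (i : Fin n) :
    pd (fun y => G (y, t)) i x = DD ((EuclideanSpace.single i 1 : E), (0:ℝ)) G (x, t) := by
  have h : HasFDerivAt (fun y => G (y, t))
      ((fderiv ℝ G (x, t)).comp ((ContinuousLinearMap.id ℝ E).prod 0)) x :=
    hG.hasFDerivAt.comp x (hasFDerivAt_slice_x t x)
  rw [pd, h.fderiv]
  simp [DD]

lemma deriv_slice (G : E × ℝ → ℝ) {x : E} {t : ℝ} (hG : DifferentiableAt ℝ G (x, t)) :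
    deriv (fun s => G (x, s)) t = DD (((0:E), (1:ℝ))) G (x, t) := by
  have h2 : HasFDerivAt (fun s : ℝ => ((x, s) : E × ℝ))
      ((0 : ℝ →L[ℝ] E).prod (ContinuousLinearMap.id ℝ ℝ)) t :=
    HasFDerivAt.prodMk (hasFDerivAt_const x t) (hasFDerivAt_id t)
  have h : HasDerivAt (fun s => G (x, s))
      (((fderiv ℝ G (x, t)).comp ((0 : ℝ →L[ℝ] E).prod (ContinuousLinearMap.id ℝ ℝ))) 1) t :=
    (hG.hasFDerivAt.comp t h2).hasDerivAt
  rw [h.deriv]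
  simp [DD]

end Slice

section Grad
variable {n : ℕ} {g h : EuclideanSpace ℝ (Fin n) → ℝ} {x : EuclideanSpace ℝ (Fin n)}

lemma fderiv_eq_inner_gradient (hg : DifferentiableAt ℝ g x) (w : EuclideanSpace ℝ (Fin n)) :
    fderiv ℝ g x w = ⟪gradient g x, w⟫ := by
  have h2 := hasGradientAt_iff_hasFDerivAt.mp hg.hasGradientAt
  rw [h2.fderiv]
  exact InnerProductSpace.toDual_apply_apply

lemma grad_apply (hg : DifferentiableAt ℝ g x) (k : Fin n) : gradient g x k = pd g k x := by
  rw [pd, fderiv_eq_inner_gradient hg]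
  rw [EuclideanSpace.inner_single_right]
  simp

lemma inner_grads (hg : DifferentiableAt ℝ g x) (hh : DifferentiableAt ℝ h x) :
    ⟪gradient g x, gradient h x⟫ = ∑ k, pd g k x * pd h k x := by
  simp only [PiLp.inner_apply, RCLike.inner_apply, starRingEnd_apply, star_trivial]
  exact Finset.sum_congr rfl fun k _ => by rw [grad_apply hg, grad_apply hh, mul_comm]

lemma norm_grad_sq (hg : DifferentiableAt ℝ g x) :
    ‖gradient g x‖ ^ 2 = ∑ k, (pd g k x) ^ 2 := by
  rw [← real_inner_self_eq_norm_sq, inner_grads hg hg]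
  exact Finset.sum_congr rfl fun k _ => (sq _).symm

end Grad

section Helpers
variable {Z : Type*} [NormedAddCommGroup Z] [NormedSpace ℝ Z]
  {c d : Z → ℝ} {c' d' : Z →L[ℝ] ℝ} {x : Z}

lemma myHasFDerivAt_div (hc : HasFDerivAt c c' x) (hd : HasFDerivAt d d' x) (hx : d x ≠ 0) :
    HasFDerivAt (fun y => c y / d y) ((d x)⁻¹ • c' + (-(c x) / d x ^ 2) • d') x := by
  have hinv : HasFDerivAt (fun y => (d y)⁻¹) ((-(d x ^ 2)⁻¹) • d') x :=
    (hasDerivAt_inv hx).comp_hasFDerivAt x hd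
  have h := hc.mul hinv
  have h2 : (fun y => c y / d y) = fun y => c y * (d y)⁻¹ := by
    funext y; rw [div_eq_mul_inv]
  rw [h2]
  refine h.congr_fderiv ?_
  ext w
  simp only [ContinuousLinearMap.add_apply, ContinuousLinearMap.coe_smul', Pi.smul_apply,
    smul_eq_mul]
  field_simp
  ring

lemma myHasFDerivAt_sq (hc : HasFDerivAt c c' x) :
    HasFDerivAt (fun y => c y ^ 2) ((2 * c x) • c') x := by
  have h := hc.mul hc
  have h2 : (fun y => c y ^ 2) = fun y => c y * c y := by funext y; rw [sq]
  rw [h2]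
  refine h.congr_fderiv ?_
  ext w
  simp only [ContinuousLinearMap.add_apply, ContinuousLinearMap.coe_smul', Pi.smul_apply,
    smul_eq_mul]
  ring

end Helpers

lemma final_algebra (n : ℕ) (WkK FkK Wk Fk : Fin n → ℝ) (Wp a l : ℝ)
    (ha : a ≠ 0) (hl : 1 - l ≠ 0) :
    -((∑ k, WkK k) / (a * (1 - l)) + Wp * l * (∑ k, FkK k) / (a * (1 - l)) ^ 2)
      + (∑ k, (((a * (1 - l)) * WkK k + Wp * l * FkK k + Wp * (Fk k) ^ 2 / a) / (a * (1 - l)) ^ 2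
               + (Wk k * (a * (1 - l)) + Wp * (l * Fk k)) * (2 * l * Fk k) / (a * (1 - l)) ^ 3))
      - 2 * l / (1 - l) *
          (∑ k, (a⁻¹ * Fk k) * (Wk k / (a * (1 - l)) + Wp * l * Fk k / (a * (1 - l)) ^ 2))
    = ((∑ k, (a⁻¹ * Fk k) ^ 2) / (1 - l)) * (Wp / (a * (1 - l))) := by
  rw [Finset.sum_div, Finset.mul_sum, Finset.sum_div, ← Finset.sum_add_distrib,
    ← Finset.sum_neg_distrib, Finset.mul_sum, ← Finset.sum_add_distrib,
    ← Finset.sum_sub_distrib, Finset.sum_div, Finset.sum_mul]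
  refine Finset.sum_congr rfl fun k _ => ?_
  field_simp
  ring

section SliceE
variable {n : ℕ} {x : EuclideanSpace ℝ (Fin n)} {t : ℝ}

noncomputable def eV (n : ℕ) (k : Fin n) : EuclideanSpace ℝ (Fin n) × ℝ :=
  (EuclideanSpace.single k 1, 0)

noncomputable def tV (n : ℕ) : EuclideanSpace ℝ (Fin n) × ℝ := (0, 1)

lemma pd_sliceE (G : EuclideanSpace ℝ (Fin n) × ℝ → ℝ) (hG : DifferentiableAt ℝ G (x, t))
    (k : Fin n) : pd (fun y => G (y, t)) k x = DD (eV n k) G (x, t) :=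
  pd_slice G hG k

lemma deriv_sliceE (G : EuclideanSpace ℝ (Fin n) × ℝ → ℝ) (hG : DifferentiableAt ℝ G (x, t)) :
    deriv (fun s => G (x, s)) t = DD (tV n) G (x, t) :=
  deriv_slice G hG

lemma slice_diff {G : EuclideanSpace ℝ (Fin n) × ℝ → ℝ} (hG : DifferentiableAt ℝ G (x, t)) :
    DifferentiableAt ℝ (fun y => G (y, t)) x :=
  hG.comp x (hasFDerivAt_slice_x t x).differentiableAt

lemma slice2E (G : EuclideanSpace ℝ (Fin n) × ℝ → ℝ) (hG : ContDiff ℝ (⊤ : ℕ∞) G)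
    (i j : Fin n) (x : EuclideanSpace ℝ (Fin n)) (t : ℝ) :
    pd (pd (fun z => G (z, t)) j) i x = DD (eV n i) (DD (eV n j) G) (x, t) := by
  have h1 : (pd (fun z => G (z, t)) j) = fun z => DD (eV n j) G (z, t) :=
    funext fun z => pd_sliceE G ((hG.differentiable (by simp)) _) j
  rw [h1, pd_sliceE (DD (eV n j) G) (((DD_smooth hG _).differentiable (by simp)) _) i]

lemma pd_congr {g1 g2 : EuclideanSpace ℝ (Fin n) → ℝ} (h : g1 =ᶠ[nhds x] g2) (k : Fin n) :
    pd g1 k x = pd g2 k x := by rw [pd, pd, h.fderiv_eq]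

end SliceE

/-- Euclidean case of Lemma 2.1: for a positive smooth solution `u ≤ A` of the
heat equation, `f = log(u/A)` and `v_{ij} = u_{ij}/(u(1−f))`, one has
`(−∂ₜ + Δ − (2f/(1−f))∇f·∇) v_{ij} = (|∇f|²/(1−f)) v_{ij}`. -/
theorem stmt_16 (n : ℕ) (T A : ℝ) (hT : 0 < T) (hA : 0 < A)
    (u : EuclideanSpace ℝ (Fin n) → ℝ → ℝ)
    (hsmooth : ContDiff ℝ (⊤ : ℕ∞) (fun p : EuclideanSpace ℝ (Fin n) × ℝ => u p.1 p.2))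
    (hpos : ∀ x t, t ∈ Set.Ioc 0 T → 0 < u x t)
    (hub : ∀ x t, t ∈ Set.Ioc 0 T → u x t ≤ A)
    (hheat : ∀ x t, t ∈ Set.Ioc 0 T → deriv (fun s => u x s) t = lap (fun y => u y t) x)
    (f : EuclideanSpace ℝ (Fin n) → ℝ → ℝ)
    (hf : ∀ x t, f x t = Real.log (u x t / A))
    (v : Fin n → Fin n → EuclideanSpace ℝ (Fin n) → ℝ → ℝ)
    (hv : ∀ i j x t, v i j x t = pd (pd (fun y => u y t) j) i x / (u x t * (1 - f x t))) :
    ∀ (i j : Fin n) (x : EuclideanSpace ℝ (Fin n)) (t : ℝ), t ∈ Set.Ioc 0 T →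
      - deriv (fun s => v i j x s) t + lap (fun y => v i j y t) x
        - (2 * f x t / (1 - f x t)) *
            ⟪gradient (fun y => f y t) x, gradient (fun y => v i j y t) x⟫
      = (‖gradient (fun y => f y t) x‖ ^ 2 / (1 - f x t)) * v i j x t := by
  intro i j x t ht
  classical
  set F : EuclideanSpace ℝ (Fin n) × ℝ → ℝ := fun q => u q.1 q.2 with hFdef
  have hF : ContDiff ℝ (⊤ : ℕ∞) F := hsmooth
  have hFd : Differentiable ℝ F := hF.differentiable (by simp)
  set W : EuclideanSpace ℝ (Fin n) × ℝ → ℝ := DD (eV n i) (DD (eV n j) F) with hWdef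
  have hWs : ContDiff ℝ (⊤ : ℕ∞) W := DD_smooth (DD_smooth hF _) _
  set G : EuclideanSpace ℝ (Fin n) × ℝ → ℝ :=
    fun q => F q * (1 - Real.log (F q / A)) with hGdef
  set Vf : EuclideanSpace ℝ (Fin n) × ℝ → ℝ := fun q => W q / G q with hVdef
  -- rewrite f and v in terms of F, Vf
  have hfV : ∀ (y : EuclideanSpace ℝ (Fin n)) (s : ℝ), f y s = Real.log (F (y, s) / A) :=
    fun y s => hf y s
  have hvV : ∀ (y : EuclideanSpace ℝ (Fin n)) (s : ℝ), v i j y s = Vf (y, s) := by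
    intro y s
    have h2 : pd (pd (fun z => u z s) j) i y = DD (eV n i) (DD (eV n j) F) (y, s) :=
      slice2E F hF i j y s
    rw [hv, hf, h2]
  simp only [hvV, hfV]
  -- basic positivity facts
  have ha : 0 < F (x, t) := hpos x t ht
  have haA : F (x, t) ≤ A := hub x t ht
  have hl0 : Real.log (F (x, t) / A) ≤ 0 :=
    Real.log_nonpos (by positivity) ((div_le_one hA).2 haA)
  have hh0 : 0 < 1 - Real.log (F (x, t) / A) := by linarith
  -- the open set S
  set S : Set (EuclideanSpace ℝ (Fin n) × ℝ) := F ⁻¹' (Set.Ioo 0 (A * Real.exp 1)) with hSdef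
  have hSopen : IsOpen S := isOpen_Ioo.preimage hF.continuous
  have hexp1 : (1 : ℝ) < Real.exp 1 := by
    have := Real.add_one_lt_exp (one_ne_zero (α := ℝ)); linarith
  have hpS : (x, t) ∈ S := by
    refine ⟨ha, lt_of_le_of_lt haA ?_⟩
    nlinarith
  have hSh : ∀ q ∈ S, 0 < 1 - Real.log (F q / A) := by
    intro q hq
    have h1 : Real.log (F q / A) < 1 := by
      refine (Real.log_lt_iff_lt_exp (div_pos hq.1 hA)).2 ?_
      rw [div_lt_iff₀ hA]
      have h2 := hq.2
      nlinarith
    linarith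
  have hGpos : ∀ q ∈ S, 0 < G q := fun q hq => mul_pos hq.1 (hSh q hq)
  have hGne : G (x, t) ≠ 0 := ne_of_gt (hGpos _ hpS)
  have hGxt : G (x, t) = F (x, t) * (1 - Real.log (F (x, t) / A)) := rfl
  -- derivative of log (F / A)
  have hfl : ∀ q ∈ S, HasFDerivAt (fun r => Real.log (F r / A))
      ((F q)⁻¹ • fderiv ℝ F q) q := by
    intro q hq
    have h1 : HasFDerivAt (fun r => F r / A) (A⁻¹ • fderiv ℝ F q) q := by
      have h0 := ((hFd q).hasFDerivAt).mul_const A⁻¹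
      have heq : (fun r => F r / A) = fun r => F r * A⁻¹ := funext fun r => div_eq_mul_inv _ _
      rw [heq]
      exact h0
    have h2 : HasDerivAt Real.log (F q / A)⁻¹ (F q / A) :=
      Real.hasDerivAt_log (ne_of_gt (div_pos hq.1 hA))
    have h3 := h2.comp_hasFDerivAt q h1
    refine h3.congr_fderiv ?_
    rw [smul_smul]
    congr 1
    have h4 : F q ≠ 0 := ne_of_gt hq.1
    have h5 : A ≠ 0 := ne_of_gt hA
    field_simp
  -- derivative of G
  have hGd : ∀ q ∈ S, HasFDerivAt G ((-Real.log (F q / A)) • fderiv ℝ F q) q := by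
    intro q hq
    have h1 : HasFDerivAt (fun r => (1 : ℝ) - Real.log (F r / A))
        (-((F q)⁻¹ • fderiv ℝ F q)) q := (hfl q hq).const_sub 1
    have h2 := ((hFd q).hasFDerivAt).mul h1
    refine h2.congr_fderiv ?_
    refine ContinuousLinearMap.ext fun w => ?_
    have h4 : F q ≠ 0 := (hq.1).ne'
    simp only [ContinuousLinearMap.add_apply, ContinuousLinearMap.coe_smul', Pi.smul_apply,
      ContinuousLinearMap.neg_apply, smul_eq_mul]
    field_simp
    ring
  -- derivative of Vf
  have hVfd : ∀ q ∈ S, HasFDerivAt Vf ((G q)⁻¹ • fderiv ℝ W q +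
      (-(W q) / G q ^ 2) • ((-Real.log (F q / A)) • fderiv ℝ F q)) q := fun q hq =>
    myHasFDerivAt_div ((hWs.differentiable (by simp) q).hasFDerivAt) (hGd q hq)
      (ne_of_gt (hGpos q hq))
  have hDDVf : ∀ q ∈ S, ∀ w, DD w Vf q =
      DD w W q / G q + W q * Real.log (F q / A) * DD w F q / G q ^ 2 := by
    intro q hq w
    have h := (hVfd q hq).fderiv
    show fderiv ℝ Vf q w = _
    rw [h]
    have hGq := (hGpos q hq).ne'
    simp only [ContinuousLinearMap.add_apply, ContinuousLinearMap.coe_smul', Pi.smul_apply,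
      smul_eq_mul, DD]
    field_simp [hGq]
  -- heat equation in DD form
  have hheat' : ∀ y, DD (tV n) F (y, t) = ∑ k, DD (eV n k) (DD (eV n k) F) (y, t) := by
    intro y
    have h := hheat y t ht
    have h1 : deriv (fun s => u y s) t = DD (tV n) F (y, t) :=
      deriv_sliceE F (hFd (y, t))
    have h2 : lap (fun z => u z t) y = ∑ k, DD (eV n k) (DD (eV n k) F) (y, t) := by
      simp only [lap]
      exact Finset.sum_congr rfl fun k _ => slice2E F hF k k y t
    rw [← h1, ← h2]
    exact h
  have hFτ : DD (tV n) F (x, t) = ∑ k, DD (eV n k) (DD (eV n k) F) (x, t) := hheat' x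
  have hsum_smooth : ContDiff ℝ (⊤ : ℕ∞) (fun q => ∑ k, DD (eV n k) (DD (eV n k) F) q) :=
    ContDiff.sum fun k _ => DD_smooth (DD_smooth hF _) _
  have hWτ : DD (tV n) W (x, t) = ∑ k, DD (eV n k) (DD (eV n k) W) (x, t) := by
    have c1 : DD (tV n) W (x, t) = DD (eV n i) (DD (eV n j) (DD (tV n) F)) (x, t) := by
      rw [hWdef]
      rw [DD_comm (DD_smooth hF (eV n j)) (tV n) (eV n i)]
      rw [DD_comm hF (tV n) (eV n j)]
    have c2 : DD (eV n i) (DD (eV n j) (DD (tV n) F)) (x, t)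
        = DD (eV n i) (DD (eV n j) (fun q => ∑ k, DD (eV n k) (DD (eV n k) F) q)) (x, t) := by
      rw [← slice2E (DD (tV n) F) (DD_smooth hF _) i j x t,
        ← slice2E _ hsum_smooth i j x t]
      have heq : (fun z => DD (tV n) F (z, t))
          = fun z => ∑ k, DD (eV n k) (DD (eV n k) F) (z, t) := funext fun z => hheat' z
      rw [heq]
    have c3 : DD (eV n i) (DD (eV n j) (fun q => ∑ k, DD (eV n k) (DD (eV n k) F) q)) (x, t)
        = ∑ k, DD (eV n i) (DD (eV n j) (DD (eV n k) (DD (eV n k) F))) (x, t) := by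
      have hin : DD (eV n j) (fun q => ∑ k, DD (eV n k) (DD (eV n k) F) q)
          = fun q => ∑ k, DD (eV n j) (DD (eV n k) (DD (eV n k) F)) q :=
        funext fun q => DD_sum Finset.univ
          (fun k _ => ((DD_smooth (DD_smooth hF _) _).differentiable (by simp)) q) (eV n j)
      rw [hin]
      exact DD_sum Finset.univ
        (fun k _ => ((DD_smooth (DD_smooth (DD_smooth hF _) _) _).differentiable (by simp)) _)
        (eV n i)
    have c4 : ∀ k : Fin n, DD (eV n i) (DD (eV n j) (DD (eV n k) (DD (eV n k) F))) (x, t)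
        = DD (eV n k) (DD (eV n k) W) (x, t) := by
      intro k
      rw [DD_comm (DD_smooth hF (eV n k)) (eV n j) (eV n k)]
      rw [DD_comm hF (eV n j) (eV n k)]
      rw [DD_comm (DD_smooth (DD_smooth hF (eV n j)) (eV n k)) (eV n i) (eV n k)]
      rw [DD_comm (DD_smooth hF (eV n j)) (eV n i) (eV n k)]
    rw [c1, c2, c3]
    exact Finset.sum_congr rfl fun k _ => c4 k
  -- the Laplacian of Vf
  have hlap : lap (fun y => Vf (y, t)) x = ∑ k,
      (((F (x, t) * (1 - Real.log (F (x, t) / A))) * DD (eV n k) (DD (eV n k) W) (x, t)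
        + W (x, t) * Real.log (F (x, t) / A) * DD (eV n k) (DD (eV n k) F) (x, t)
        + W (x, t) * DD (eV n k) F (x, t) ^ 2 / F (x, t))
          / (F (x, t) * (1 - Real.log (F (x, t) / A))) ^ 2
      + (DD (eV n k) W (x, t) * (F (x, t) * (1 - Real.log (F (x, t) / A)))
         + W (x, t) * (Real.log (F (x, t) / A) * DD (eV n k) F (x, t)))
        * (2 * Real.log (F (x, t) / A) * DD (eV n k) F (x, t))
          / (F (x, t) * (1 - Real.log (F (x, t) / A))) ^ 3) := by
    simp only [lap]
    refine Finset.sum_congr rfl fun k _ => ?_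
    have hT : {y : EuclideanSpace ℝ (Fin n) | (y, t) ∈ S} ∈ nhds x :=
      ((continuous_id.prodMk continuous_const).continuousAt).preimage_mem_nhds
        (hSopen.mem_nhds hpS)
    have hΦeq : ∀ q ∈ S, DD (eV n k) Vf q =
        (DD (eV n k) W q * G q + W q * (Real.log (F q / A) * DD (eV n k) F q)) / G q ^ 2 := by
      intro q hq
      rw [hDDVf q hq (eV n k)]
      have hGq := (hGpos q hq).ne'
      field_simp
    have hev : (pd (fun z => Vf (z, t)) k) =ᶠ[nhds x]
        (fun y => (DD (eV n k) W (y, t) * G (y, t)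
          + W (y, t) * (Real.log (F (y, t) / A) * DD (eV n k) F (y, t))) / G (y, t) ^ 2) := by
      filter_upwards [hT] with y hy
      rw [pd_sliceE Vf (hVfd (y, t) hy).differentiableAt k]
      exact hΦeq (y, t) hy
    rw [pd_congr hev k]
    have hWkd : HasFDerivAt (DD (eV n k) W) (fderiv ℝ (DD (eV n k) W) (x, t)) (x, t) :=
      (((DD_smooth hWs (eV n k)).differentiable (by simp)) (x, t)).hasFDerivAt
    have hWd : HasFDerivAt W (fderiv ℝ W (x, t)) (x, t) :=
      ((hWs.differentiable (by simp)) (x, t)).hasFDerivAt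
    have hFkd : HasFDerivAt (DD (eV n k) F) (fderiv ℝ (DD (eV n k) F) (x, t)) (x, t) :=
      (((DD_smooth hF (eV n k)).differentiable (by simp)) (x, t)).hasFDerivAt
    have hN := (hWkd.mul (hGd _ hpS)).add (hWd.mul ((hfl _ hpS).mul hFkd))
    have hden := myHasFDerivAt_sq (hGd _ hpS)
    have hΦk := myHasFDerivAt_div hN hden (pow_ne_zero 2 hGne)
    rw [pd_sliceE (fun q => (DD (eV n k) W q * G q
      + W q * (Real.log (F q / A) * DD (eV n k) F q)) / G q ^ 2) hΦk.differentiableAt k]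
    show fderiv ℝ _ (x, t) (eV n k) = _
    erw [hΦk.fderiv]
    have han : F (x, t) ≠ 0 := ne_of_gt ha
    have hhn : (1 : ℝ) - Real.log (F (x, t) / A) ≠ 0 := ne_of_gt hh0
    simp only [ContinuousLinearMap.add_apply, ContinuousLinearMap.coe_smul', Pi.smul_apply,
      ContinuousLinearMap.neg_apply, smul_eq_mul, DD, eV, hGdef, Pi.add_apply, Pi.mul_apply]
    field_simp
    ring
  -- time derivative of Vf
  have h1 : deriv (fun s => Vf (x, s)) t =
      (∑ k, DD (eV n k) (DD (eV n k) W) (x, t)) / (F (x, t) * (1 - Real.log (F (x, t) / A)))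
      + W (x, t) * Real.log (F (x, t) / A) * (∑ k, DD (eV n k) (DD (eV n k) F) (x, t))
        / (F (x, t) * (1 - Real.log (F (x, t) / A))) ^ 2 := by
    rw [deriv_sliceE Vf (hVfd _ hpS).differentiableAt, hDDVf _ hpS (tV n), hWτ, hFτ, hGxt]
  -- gradient facts
  have hDDfl : ∀ w, DD w (fun r => Real.log (F r / A)) (x, t) = (F (x, t))⁻¹ * DD w F (x, t) := by
    intro w
    show fderiv ℝ (fun r => Real.log (F r / A)) (x, t) w = _
    rw [(hfl _ hpS).fderiv]
    simp only [ContinuousLinearMap.coe_smul', Pi.smul_apply, smul_eq_mul, DD]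
  have hdf : DifferentiableAt ℝ (fun y => Real.log (F (y, t) / A)) x :=
    slice_diff (hfl _ hpS).differentiableAt
  have hdV : DifferentiableAt ℝ (fun y => Vf (y, t)) x :=
    slice_diff (hVfd _ hpS).differentiableAt
  have h3 : inner ℝ (gradient (fun y => Real.log (F (y, t) / A)) x)
      (gradient (fun y => Vf (y, t)) x) =
      ∑ k, ((F (x, t))⁻¹ * DD (eV n k) F (x, t)) *
        (DD (eV n k) W (x, t) / (F (x, t) * (1 - Real.log (F (x, t) / A)))
         + W (x, t) * Real.log (F (x, t) / A) * DD (eV n k) F (x, t)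
            / (F (x, t) * (1 - Real.log (F (x, t) / A))) ^ 2) := by
    rw [inner_grads hdf hdV]
    refine Finset.sum_congr rfl fun k _ => ?_
    rw [pd_sliceE (fun r => Real.log (F r / A)) (hfl _ hpS).differentiableAt k,
      pd_sliceE Vf (hVfd _ hpS).differentiableAt k,
      hDDfl (eV n k), hDDVf _ hpS (eV n k), hGxt]
  have h4 : ‖gradient (fun y => Real.log (F (y, t) / A)) x‖ ^ 2 =
      ∑ k, ((F (x, t))⁻¹ * DD (eV n k) F (x, t)) ^ 2 := by
    rw [norm_grad_sq hdf]
    refine Finset.sum_congr rfl fun k _ => ?_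
    rw [pd_sliceE (fun r => Real.log (F r / A)) (hfl _ hpS).differentiableAt k, hDDfl (eV n k)]
  have h5 : Vf (x, t) = W (x, t) / (F (x, t) * (1 - Real.log (F (x, t) / A))) := by
    show W (x, t) / G (x, t) = _
    rw [hGxt]
  rw [h1, hlap, h3, h4, h5]
  exact final_algebra n (fun k => DD (eV n k) (DD (eV n k) W) (x, t))
    (fun k => DD (eV n k) (DD (eV n k) F) (x, t))
    (fun k => DD (eV n k) W (x, t)) (fun k => DD (eV n k) F (x, t))
    (W (x, t)) (F (x, t)) (Real.log (F (x, t) / A)) (ne_of_gt ha) (ne_of_gt hh0)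
end

section
/- Let a > 0 and u(x,t) = exp(a·x + a²t) on ℝ × ℝ. For the cube Q = [1,3] × [1,2] with A = sup_Q u, there is no universal constant C (independent of a) such that u_{xx}(2,2)/u(2,2) ≤ C (1 + log(A/u(2,2))); i.e., the ratio [u_{xx}(2,2)/u(2,2)] / (1 + log(A/u(2,2))) = a²/(1+a) tends to infinity as a → ∞. -/
open Filter Real Set

lemma deriv_deriv_exp_mul_add (a c x : ℝ) :
    deriv (deriv fun y => exp (a * y + c)) x = a ^ 2 * exp (a * x + c) := by
  have h : ∀ x, HasDerivAt (fun y => exp (a * y + c)) (exp (a * x + c) * a) x := fun x => by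
    simpa using (((hasDerivAt_id x).const_mul a).add_const c).exp
  rw [funext fun x => (h x).deriv, ((h x).mul_const a).deriv]
  ring

lemma isGreatest_exp_image_Icc_prod_Icc {a x₀ x₁ t₀ t₁ : ℝ} (ha : 0 ≤ a) (hx : x₀ ≤ x₁)
    (ht : t₀ ≤ t₁) :
    IsGreatest ((fun p : ℝ × ℝ => exp (a * p.1 + a ^ 2 * p.2)) '' (Icc x₀ x₁ ×ˢ Icc t₀ t₁))
      (exp (a * x₁ + a ^ 2 * t₁)) := by
  refine ⟨⟨(x₁, t₁), ⟨⟨hx, le_rfl⟩, ⟨ht, le_rfl⟩⟩, rfl⟩, ?_⟩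
  rintro _ ⟨⟨x, t⟩, ⟨⟨-, hx₁⟩, ⟨-, ht₁⟩⟩, rfl⟩
  dsimp only
  gcongr

lemma tendsto_sq_div_one_add_atTop : Tendsto (fun a : ℝ => a ^ 2 / (1 + a)) atTop atTop := by
  refine tendsto_atTop_mono' _ ?_ (tendsto_atTop_add_const_right _ (-1) tendsto_id)
  filter_upwards [eventually_ge_atTop 0] with a ha
  rw [id, le_div_iff₀ (by linarith)]
  nlinarith

lemma not_exists_sq_le_mul_one_add : ¬ ∃ C : ℝ, ∀ a : ℝ, 0 < a → a ^ 2 ≤ C * (1 + a) := by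
  rintro ⟨C, hC⟩
  obtain ⟨a, hCa, ha⟩ :=
    ((tendsto_sq_div_one_add_atTop.eventually_gt_atTop C).and (eventually_gt_atTop 0)).exists
  rw [lt_div_iff₀ (by linarith)] at hCa
  linarith [hC a ha]

/-- Sharpness of the local Hessian estimate: for `u(x,t) = exp(a x + a² t)` on
`Q = [1,3]×[1,2]` with `A = sup_Q u`, there is no universal constant `C`
(independent of `a > 0`) with `u_{xx}(2,2)/u(2,2) ≤ C(1 + log(A/u(2,2)))`;
indeed the ratio equals `a²/(1+a) → ∞` as `a → ∞`. -/
theorem stmt_18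
    (u : ℝ → ℝ → ℝ → ℝ) (hu : ∀ a x t, u a x t = Real.exp (a * x + a ^ 2 * t))
    (A : ℝ → ℝ)
    (hA : ∀ a, A a = sSup ((fun p : ℝ × ℝ => u a p.1 p.2) '' (Set.Icc 1 3 ×ˢ Set.Icc 1 2))) :
    (¬ ∃ C : ℝ, ∀ a : ℝ, 0 < a →
      deriv (deriv (fun y => u a y 2)) 2 / u a 2 2
        ≤ C * (1 + Real.log (A a / u a 2 2))) ∧
    (∀ a : ℝ, 0 < a →
      (deriv (deriv (fun y => u a y 2)) 2 / u a 2 2) / (1 + Real.log (A a / u a 2 2))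
        = a ^ 2 / (1 + a)) ∧
    Tendsto (fun a : ℝ => a ^ 2 / (1 + a)) atTop atTop := by
  have hratio : ∀ a, 0 < a →
      deriv (deriv (fun y => u a y 2)) 2 / u a 2 2 = a ^ 2 ∧ log (A a / u a 2 2) = a := by
    intro a ha
    simp only [hu, hA]
    rw [deriv_deriv_exp_mul_add,
      (isGreatest_exp_image_Icc_prod_Icc ha.le (by norm_num) (by norm_num)).csSup_eq,
      ← exp_sub, log_exp]
    constructor
    · field_simp
    · ring
  refine ⟨?_, fun a ha => ?_, tendsto_sq_div_one_add_atTop⟩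
  · rintro ⟨C, hC⟩
    refine not_exists_sq_le_mul_one_add ⟨C, fun a ha => ?_⟩
    simpa only [(hratio a ha).1, (hratio a ha).2] using hC a ha
  · rw [(hratio a ha).1, (hratio a ha).2]
end
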